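/- Let P be a reducible VASS (with finitely many locations) and let p be an infinite path of P starting at the entry location. Then there exists a loop-path π of P such that p contains infinitely many instances of π. -/

import Mathlib

open scoped BigOperators

/-- Update vectors in `ℤⁿ`. -/
abbrev Upd (n : ℕ) := Fin n → ℤ

/-- Valuations of the variables (values are natural numbers). -/
abbrev Valu (n : ℕ) := Fin n → ℕ

/-- An edge (transition) of a VASS: source location, update vector, target location. -/
abbrev VEdge (n : ℕ) (L : Type*) := L × Upd n × L

/-- A lossy vector addition system with states over `n` variables and locations `L`. -/
structure VASS (n : ℕ) (L : Type*) where
  E : Set (VEdge n L)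

namespace VASS

variable {n : ℕ} {L : Type*}

/-- `FPath P a p b`: the list of edges `p` is a finite path of `P` from `a` to `b`. -/
inductive FPath (P : VASS n L) : L → List (VEdge n L) → L → Prop
  | nil (a : L) : FPath P a [] a
  | cons {a b c : L} {d : Upd n} {p : List (VEdge n L)} :
      (a, d, b) ∈ P.E → FPath P b p c → FPath P a ((a, d, b) :: p) c

/-- `x` occurs among the locations of the path `p` starting at location `a`. -/
def Visits (a : L) (p : List (VEdge n L)) (x : L) : Prop :=
  x = a ∨ ∃ e ∈ p, e.2.2 = x

/-- `a` dominates `b` (w.r.t. the entry location):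
every path from the entry to `b` includes `a`. -/
def Dominates (P : VASS n L) (entry a b : L) : Prop :=
  ∀ p : List (VEdge n L), P.FPath entry p b → Visits entry p a

/-- An edge `l₁ → l₂` is a back edge if `l₂` dominates `l₁`. -/
def BackEdge (P : VASS n L) (entry : L) (e : VEdge n L) : Prop :=
  e ∈ P.E ∧ P.Dominates entry e.2.2 e.1

/-- All locations are reachable from the entry location. -/
def EntryReach (P : VASS n L) (entry : L) : Prop :=
  ∀ x : L, ∃ p, P.FPath entry p x

/-- `P` is reducible: the graph becomes acyclic after removing all back edges. -/
def Reducible (P : VASS n L) (entry : L) : Prop :=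
  ∀ (a : L) (p : List (VEdge n L)), (∀ e ∈ p, ¬ P.BackEdge entry e) → P.FPath a p a → p = []

/-- `h` is a loop header: the target of some back edge. -/
def LoopHeader (P : VASS n L) (entry h : L) : Prop :=
  ∃ e, P.BackEdge entry e ∧ e.2.2 = h

/-- The natural loop of the loop header `h`: all locations `x` dominated by `h` such that
there is a back edge `m → h` and a path from `x` to `m` that does not contain `h`. -/
def NaturalLoop (P : VASS n L) (entry h : L) : Set L :=
  {x | P.Dominates entry h x ∧ ∃ e, P.BackEdge entry e ∧ e.2.2 = h ∧
    ∃ p, P.FPath x p e.1 ∧ ∀ e' ∈ p, e'.2.2 ≠ h}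

/-- `p` is a loop-path at loop header `l`: a simple cyclic path starting and ending at `l`
that visits only locations inside the natural loop of `l`. -/
def LoopPath (P : VASS n L) (entry l : L) (p : List (VEdge n L)) : Prop :=
  P.LoopHeader entry l ∧ P.FPath l p l ∧ p ≠ [] ∧ (p.map Prod.fst).Nodup ∧
    ∀ x, Visits l p x → x ∈ P.NaturalLoop entry l

/-- The contracted update of a path: the sum of the update vectors along the path. -/
def contractUpd (p : List (VEdge n L)) : Upd n :=
  (p.map (fun e => e.2.1)).sum

/-- Control flow abstraction: the transition system containing the contracted update
of every loop-path of `P`. -/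
def CFA (P : VASS n L) (entry : L) : Set (Upd n) :=
  {c | ∃ l p, P.LoopPath entry l p ∧ c = contractUpd p}

/-- `InstanceAux P h π ν D`: `ν` is an instance of the loop-path `π` (whose header is `h`),
interleaving the designated transitions of `π` with cyclic filler paths avoiding `h`;
`D` is the set of positions in `ν` of the designated transitions of `π`. -/
inductive InstanceAux (P : VASS n L) (h : L) :
    List (VEdge n L) → List (VEdge n L) → Set ℕ → Prop
  | single (e : VEdge n L) : InstanceAux P h [e] [e] {0}
  | cons (e : VEdge n L) (q rest ν : List (VEdge n L)) (D : Set ℕ) :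
      P.FPath e.2.2 q e.2.2 → e.2.2 ≠ h → (∀ e' ∈ q, e'.2.2 ≠ h) →
      InstanceAux P h rest ν D →
      InstanceAux P h (e :: rest) (e :: (q ++ ν)) (insert 0 ((fun m => m + q.length + 1) '' D))

/-- `ν` is an instance of the loop-path `π`, with `D` the positions of the
designated transitions of `π` inside `ν`. -/
def IsInstance (P : VASS n L) (π ν : List (VEdge n L)) (D : Set ℕ) : Prop :=
  ∃ e rest, π = e :: rest ∧ P.InstanceAux e.1 π ν D

/-- The path `p` contains an instance of `π` starting at position `i` and of length `k`. -/
def InstanceAt (P : VASS n L) (π p : List (VEdge n L)) (i k : ℕ) : Prop :=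
  i + k ≤ p.length ∧ 1 ≤ k ∧ ∃ D, P.IsInstance π ((p.drop i).take k) D

/-- The number of instances of the loop-path `π` contained in the path `p`. -/
noncomputable def numInstances (P : VASS n L) (π p : List (VEdge n L)) : ℕ :=
  {q : ℕ × ℕ | P.InstanceAt π p q.1 q.2}.ncard

/-- The transition occurrence at position `t` of the path `p` belongs to the instance of
the loop-path `π` contained in `p` at position `i` with length `k` (i.e. `t` is one of the
designated transitions of that instance). -/
def BelongsAt (P : VASS n L) (π p : List (VEdge n L)) (i k t : ℕ) : Prop :=
  i + k ≤ p.length ∧ 1 ≤ k ∧ i ≤ t ∧ t < i + k ∧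
    ∃ D, P.IsInstance π ((p.drop i).take k) D ∧ (t - i) ∈ D

/-- An infinite trace of the VASS `P`. -/
def InfTrace (P : VASS n L) (locs : ℕ → L) (upds : ℕ → Upd n) (vals : ℕ → Valu n) : Prop :=
  ∀ i, (locs i, upds i, locs (i+1)) ∈ P.E ∧
    ∀ j, (vals (i+1) j : ℤ) ≤ (vals i j : ℤ) + upds i j

/-- `P` is terminating: it has no infinite trace. -/
def Terminating (P : VASS n L) : Prop :=
  ¬ ∃ locs upds vals, P.InfTrace locs upds vals

/-- The valuations `vals` form a trace of `P` along the finite path `p`. -/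
def FinTraceVals (P : VASS n L) (p : List (VEdge n L)) (vals : ℕ → Valu n) : Prop :=
  ∀ (i : ℕ) (hi : i < p.length), ∀ j,
    (vals (i+1) j : ℤ) ≤ (vals i j : ℤ) + (p.get ⟨i, hi⟩).2.1 j

end VASS

/-- An enumeration `τ₁,…,τ_k` of the transition system `T` together with variables
`y₁,…,y_k` satisfies the ranking condition of the `Ranking` algorithm:
`τᵢ ⊨ yᵢ' < yᵢ`, and `τⱼ ⊨ yᵢ' ≤ yᵢ` for all `j ≥ i`. -/
def RankingCondition {n : ℕ} (T : Set (Upd n)) {k : ℕ}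
    (τ : Fin k → Upd n) (y : Fin k → Fin n) : Prop :=
  Function.Injective τ ∧ Set.range τ = T ∧
    (∀ i, τ i (y i) < 0) ∧ ∀ i j : Fin k, i ≤ j → τ j (y i) ≤ 0

/-- An infinite lossy execution of the transition system `T`. -/
def LossyExec {n : ℕ} (T : Set (Upd n)) (v : ℕ → Valu n) (d : ℕ → Upd n) : Prop :=
  ∀ m, d m ∈ T ∧ ∀ j, (v (m+1) j : ℤ) ≤ (v m j : ℤ) + d m j

/-- A finite lossy execution `v 0, …, v N` of the transition system `T`. -/
def FinLossyExec {n : ℕ} (T : Set (Upd n)) (N : ℕ) (v : ℕ → Valu n) (d : ℕ → Upd n) : Prop :=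
  ∀ m < N, d m ∈ T ∧ ∀ j, (v (m+1) j : ℤ) ≤ (v m j : ℤ) + d m j

/-!
Along an infinite path back edges are taken infinitely often: two visits of the same location
after the last back edge would enclose a cycle without back edges, which reducibility forbids.
Fix a back edge `m → h` that is taken infinitely often. As `h` dominates `m`, each traversal at a
time `t` is preceded by a last visit of `h`, and the segment from there to `t + 1` is a cycle at `h`
not passing through `h` in between. Following its first edge `a → b` and jumping to the last
visit of `b` turns it into an instance of a simple cycle at `h`; every location of that cycle
reaches `m` without passing `h`, so the cycle is a loop-path. Loop-paths are finitely many, hence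
one of them arises for infinitely many `t`.
-/

theorem Set.Infinite.exists_infinite_fiber {α β : Type*} {s : Set α} {t : Set β} {f : α → β}
    (hs : s.Infinite) (hf : Set.MapsTo f s t) (ht : t.Finite) :
    ∃ b ∈ t, (s ∩ f ⁻¹' {b}).Infinite := by
  by_contra! hfin
  exact hs <| Set.Finite.of_finite_fibers f (ht.subset (Set.image_subset_iff.2 hf))
    fun _ ⟨a, ha, hab⟩ => hfin _ (hab ▸ hf ha)

theorem Set.Finite.setOf_forall_mem_length_le {α : Type*} {s : Set α} (hs : s.Finite) (N : ℕ) :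
    {l : List α | (∀ x ∈ l, x ∈ s) ∧ l.length ≤ N}.Finite := by
  have := hs.to_subtype
  refine ((List.finite_length_le s N).image (List.map (↑))).subset ?_
  rintro l ⟨hl, hlen⟩
  lift l to List s using hl
  exact ⟨l, by simpa using hlen, rfl⟩

theorem List.exists_last_occurrence {α : Type*} {p : α → Prop} {l : List α}
    (h : ∃ x ∈ l, p x) : ∃ q x r, l = q ++ x :: r ∧ p x ∧ ∀ y ∈ r, ¬ p y := by
  induction l with
  | nil => simp at h
  | cons y l ih =>
    by_cases hl : ∃ x ∈ l, p x
    · obtain ⟨q, x, r, rfl, hx, hr⟩ := ih hl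
      exact ⟨y :: q, x, r, rfl, hx, hr⟩
    · push Not at hl
      obtain ⟨x, hx, hpx⟩ := h
      obtain rfl | hx := List.mem_cons.1 hx
      · exact ⟨[], x, l, rfl, hpx, hl⟩
      · exact absurd hpx (hl x hx)

namespace VASS

variable {n : ℕ} {L : Type*} {P : VASS n L}

theorem FPath.append {a b c : L} {p q : List (VEdge n L)} (hp : P.FPath a p b)
    (hq : P.FPath b q c) : P.FPath a (p ++ q) c := by
  induction hp with
  | nil => simpa using hq
  | cons he _ ih => exact .cons he (ih hq)

theorem FPath.eq_of_nil {a b : L} (h : P.FPath a [] b) : a = b := by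
  cases h; rfl

theorem FPath.of_cons {a c : L} {e : VEdge n L} {p : List (VEdge n L)}
    (h : P.FPath a (e :: p) c) : e.1 = a ∧ e ∈ P.E ∧ P.FPath e.2.2 p c := by
  cases h with
  | cons he hp => exact ⟨rfl, he, hp⟩

theorem FPath.of_append {a c : L} {p q : List (VEdge n L)} (h : P.FPath a (p ++ q) c) :
    ∃ b, P.FPath a p b ∧ P.FPath b q c := by
  induction p generalizing a with
  | nil => exact ⟨a, .nil a, h⟩
  | cons e p ih =>
    obtain ⟨rfl, he, hpq⟩ := h.of_cons
    obtain ⟨b, hp, hq⟩ := ih hpq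
    exact ⟨b, .cons he hp, hq⟩

theorem FPath.mem_E {a b : L} {p : List (VEdge n L)} (h : P.FPath a p b) : ∀ e ∈ p, e ∈ P.E := by
  induction h with
  | nil => simp
  | cons he _ ih => simpa [he] using ih

theorem FPath.target_ne_of_source_ne {a c h : L} {p : List (VEdge n L)} (hp : P.FPath a p c)
    (hsrc : ∀ e ∈ p, e.1 ≠ h) (hc : c ≠ h) : ∀ e ∈ p, e.2.2 ≠ h := by
  induction hp with
  | nil => simp
  | @cons a b c d p _ hp ih =>
    have hb : b ≠ h := by
      cases p with
      | nil => exact hp.eq_of_nil ▸ hc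
      | cons e p => exact hp.of_cons.1 ▸ hsrc e (by simp)
    simpa [hb] using ih (fun e he => hsrc e (List.mem_cons_of_mem _ he)) hc

theorem Visits.of_subset {a x : L} {p q : List (VEdge n L)} (hpq : p ⊆ q) (hx : Visits a p x) :
    Visits a q x :=
  hx.imp_right fun ⟨e, he, hex⟩ => ⟨e, hpq he, hex⟩

theorem Dominates.of_fpath {entry h x m : L} (hdom : P.Dominates entry h m)
    {p : List (VEdge n L)} (hp : P.FPath x p m) (hp_h : ∀ e ∈ p, e.2.2 ≠ h) :
    P.Dominates entry h x := by
  intro q hq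
  rcases hdom _ (hq.append hp) with rfl | ⟨e, he, rfl⟩
  · exact .inl rfl
  · rcases List.mem_append.1 he with he | he
    · exact .inr ⟨e, he, rfl⟩
    · exact absurd rfl (hp_h e he)

theorem mem_naturalLoop_of_fpath {entry x : L} {e : VEdge n L} (he : P.BackEdge entry e)
    {p : List (VEdge n L)} (hp : P.FPath x p e.1) (hp_h : ∀ e' ∈ p, e'.2.2 ≠ e.2.2) :
    x ∈ P.NaturalLoop entry e.2.2 :=
  ⟨he.2.of_fpath hp hp_h, e, he, rfl, p, hp, hp_h⟩

theorem finite_setOf_loopPath [Finite L] (hE : P.E.Finite) (entry l : L) :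
    {π | P.LoopPath entry l π}.Finite := by
  have := Fintype.ofFinite L
  refine (hE.setOf_forall_mem_length_le (Fintype.card L)).subset fun π hπ => ⟨hπ.2.1.mem_E, ?_⟩
  simpa using hπ.2.2.2.1.length_le_card

section InstanceAux

variable {h : L} {π ν : List (VEdge n L)} {D : Set ℕ}

theorem InstanceAux.subset (hI : P.InstanceAux h π ν D) : π ⊆ ν := by
  induction hI with
  | single => simp
  | cons e q rest ν D _ _ _ _ ih =>
    exact List.cons_subset_cons _ (List.Subset.trans ih (List.subset_append_right q ν))

theorem InstanceAux.ne_nil (hI : P.InstanceAux h π ν D) : π ≠ [] := by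
  cases hI <;> simp

theorem InstanceAux.isInstance {c : L} (hI : P.InstanceAux h π ν D) (hπ : P.FPath h π c) :
    P.IsInstance π ν D := by
  obtain ⟨e, rest, rfl⟩ := List.exists_cons_of_ne_nil hI.ne_nil
  exact ⟨e, rest, rfl, hπ.of_cons.1 ▸ hI⟩

end InstanceAux

theorem FPath.exists_instanceAux {h a : L} {s : List (VEdge n L)} (hs : P.FPath a s h)
    (hne : s ≠ []) (hint : ∀ e ∈ s.tail, e.1 ≠ h ∧ e.1 ≠ a) :
    ∃ π D, P.InstanceAux h π s D ∧ P.FPath a π h ∧ (π.map Prod.fst).Nodup := by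
  induction hlen : s.length using Nat.strong_induction_on generalizing a s with
  | _ N ih =>
  obtain ⟨e, rest, rfl⟩ := List.exists_cons_of_ne_nil hne
  obtain ⟨rfl, he, hrest⟩ := hs.of_cons
  rcases rest with _ | ⟨e', rest⟩
  · obtain rfl := hrest.eq_of_nil
    exact ⟨_, _, .single e, .cons he (.nil _), by simp⟩
  have hb : e.2.2 ≠ h ∧ e.2.2 ≠ e.1 := hrest.of_cons.1 ▸ hint e' (by simp)
  -- Up to its last visit of `e.2.2`, the rest of `s` is a cycle `q` at `e.2.2`, the filler.
  obtain ⟨q, x, r, hsplit, hxb, hr⟩ := (e' :: rest).exists_last_occurrence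
    (p := fun y => y.1 = e.2.2) ⟨e', by simp, hrest.of_cons.1⟩
  rw [hsplit] at hrest hint hlen ⊢
  obtain ⟨c, hq, hxr⟩ := hrest.of_append
  obtain rfl : c = e.2.2 := hxr.of_cons.1.symm.trans hxb
  have hint' : ∀ y ∈ q ++ x :: r, y.1 ≠ h ∧ y.1 ≠ e.1 := hint
  obtain ⟨π, D, hI, hπ, hnd⟩ := ih (x :: r).length (by simp [← hlen]) hxr
    (List.cons_ne_nil _ _) (fun y (hy : y ∈ r) => ⟨(hint' y (by simp [hy])).1, hr y hy⟩) rfl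
  have hq_h := hq.target_ne_of_source_ne (fun y hy => (hint' y (by simp [hy])).1) hb.1
  refine ⟨e :: π, _, .cons _ q π (x :: r) D hq hb.1 hq_h hI, .cons he hπ,
    List.nodup_cons.2 ⟨fun ha => ?_, hnd⟩⟩
  obtain ⟨y, hy, hya⟩ := List.mem_map.1 ha
  exact (hint' y (List.mem_append_right q (hI.subset hy))).2 hya

section InfinitePath

variable (locs : ℕ → L) (upds : ℕ → Upd n)

def pathSeg (i k : ℕ) : List (VEdge n L) :=
  (List.range k).map fun m => (locs (i+m), upds (i+m), locs (i+m+1))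

variable {locs upds}

theorem length_pathSeg (i k : ℕ) : (pathSeg locs upds i k).length = k := by
  simp [pathSeg]

theorem mem_pathSeg {i k : ℕ} {e : VEdge n L} :
    e ∈ pathSeg locs upds i k ↔ ∃ m < k, (locs (i+m), upds (i+m), locs (i+m+1)) = e := by
  simp [pathSeg]

theorem pathSeg_succ (i k : ℕ) :
    pathSeg locs upds i (k+1) = (locs i, upds i, locs (i+1)) :: pathSeg locs upds (i+1) k := by
  simp only [pathSeg, List.range_succ_eq_map, List.map_cons, List.map_map]
  congr 2
  funext m
  simp only [Function.comp_apply, show i + (m + 1) = i + 1 + m by omega]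

theorem tail_pathSeg (i k : ℕ) :
    (pathSeg locs upds i k).tail = pathSeg locs upds (i+1) (k-1) := by
  cases k with
  | zero => rfl
  | succ k => rw [pathSeg_succ]; rfl

theorem fpath_pathSeg (hpath : ∀ i, (locs i, upds i, locs (i+1)) ∈ P.E) (i k : ℕ) :
    P.FPath (locs i) (pathSeg locs upds i k) (locs (i+k)) := by
  induction k generalizing i with
  | zero => simpa [pathSeg] using .nil _
  | succ k ih =>
    rw [pathSeg_succ, show i + (k + 1) = i + 1 + k by omega]
    exact .cons (hpath i) (ih (i+1))

theorem exists_of_visits_pathSeg {i k : ℕ} {x : L}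
    (hx : Visits (locs i) (pathSeg locs upds i k) x) : ∃ j ≤ k, locs (i+j) = x := by
  rcases hx with rfl | ⟨e, he, rfl⟩
  · exact ⟨0, Nat.zero_le k, rfl⟩
  · obtain ⟨m, hm, rfl⟩ := mem_pathSeg.1 he
    exact ⟨m + 1, hm, rfl⟩

variable {entry : L} (hpath : ∀ i, (locs i, upds i, locs (i+1)) ∈ P.E)
include hpath

theorem infinite_setOf_backEdge [Finite L] (hred : P.Reducible entry) :
    {t | P.BackEdge entry (locs t, upds t, locs (t+1))}.Infinite := by
  refine Set.infinite_of_forall_exists_gt fun t₀ => ?_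
  by_contra! hbound
  obtain ⟨u, hu, v, -, huv, hloc⟩ := (Set.Ioi_infinite t₀).exists_lt_map_eq_of_mapsTo
    (Set.mapsTo_univ locs _) Set.finite_univ
  have hcyc := fpath_pathSeg hpath u (v - u)
  rw [Nat.add_sub_cancel' huv.le, ← hloc] at hcyc
  have hnil := hred _ _ (fun e he hbe => ?_) hcyc
  · have hlen := congrArg List.length hnil
    simp only [length_pathSeg, List.length_nil] at hlen
    omega
  · obtain ⟨m, -, rfl⟩ := mem_pathSeg.1 he
    exact absurd (hbound _ hbe) (by simp at hu; omega)

theorem exists_backEdge_infinitely_often [Finite L] (hE : P.E.Finite)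
    (hred : P.Reducible entry) :
    ∃ e, P.BackEdge entry e ∧ {t | (locs t, upds t, locs (t+1)) = e}.Infinite := by
  obtain ⟨e, he, hinf⟩ := (infinite_setOf_backEdge hpath hred).exists_infinite_fiber
    (t := {e | P.BackEdge entry e}) (fun _ ht => ht) (hE.subset fun _ he => he.1)
  exact ⟨e, he, hinf.mono fun _ ht => ht.2⟩

theorem exists_last_visit (h0 : locs 0 = entry) {h : L} {t : ℕ}
    (hdom : P.Dominates entry h (locs t)) :
    ∃ s ≤ t, locs s = h ∧ ∀ r, s < r → r ≤ t → locs r ≠ h := by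
  classical
  have hvisit : ∃ s ≤ t, locs s = h := by
    have hp := fpath_pathSeg hpath 0 t
    rw [h0, Nat.zero_add] at hp
    obtain ⟨j, hj, hx⟩ := exists_of_visits_pathSeg (h0 ▸ hdom _ hp)
    exact ⟨j, hj, by simpa using hx⟩
  obtain ⟨s, hst, hs⟩ := hvisit
  exact ⟨_, Nat.findGreatest_le t, Nat.findGreatest_spec (P := fun r => locs r = h) hst hs,
    fun r hr hrt => Nat.findGreatest_is_greatest hr hrt⟩

theorem locs_mem_naturalLoop {t s i : ℕ} (hbe : P.BackEdge entry (locs t, upds t, locs (t+1)))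
    (hlast : ∀ r, s < r → r ≤ t → locs r ≠ locs (t+1)) (hsi : s ≤ i) (hit : i ≤ t) :
    locs i ∈ P.NaturalLoop entry (locs (t+1)) := by
  have hp := fpath_pathSeg hpath i (t - i)
  rw [Nat.add_sub_cancel' hit] at hp
  refine mem_naturalLoop_of_fpath hbe hp fun e he => ?_
  obtain ⟨m, hm, rfl⟩ := mem_pathSeg.1 he
  exact hlast _ (by omega) (by omega)

theorem exists_loopPath_instance_of_backEdge (h0 : locs 0 = entry) {t : ℕ}
    (hbe : P.BackEdge entry (locs t, upds t, locs (t+1))) :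
    ∃ s ≤ t, (∀ r, s < r → r ≤ t → locs r ≠ locs (t+1)) ∧
      ∃ π, P.LoopPath entry (locs (t+1)) π ∧
        ∃ D, P.IsInstance π (pathSeg locs upds s (t+1-s)) D := by
  obtain ⟨s, hst, hs, hlast⟩ := exists_last_visit hpath h0 (h := locs (t+1)) hbe.2
  have hseg := fpath_pathSeg hpath s (t+1-s)
  rw [Nat.add_sub_cancel' (by omega), hs] at hseg
  have hne : pathSeg locs upds s (t+1-s) ≠ [] :=
    List.ne_nil_of_length_pos (by rw [length_pathSeg]; omega)
  obtain ⟨π, D, hI, hπ, hnd⟩ := hseg.exists_instanceAux hne fun e he => by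
    rw [tail_pathSeg] at he
    obtain ⟨m, hm, rfl⟩ := mem_pathSeg.1 he
    exact ⟨hlast (s+1+m) (by omega) (by omega), hlast (s+1+m) (by omega) (by omega)⟩
  refine ⟨s, hst, hlast, π, ⟨⟨_, hbe, rfl⟩, hπ, hI.ne_nil, hnd, fun x hx => ?_⟩, D,
    hI.isInstance hπ⟩
  rw [← hs] at hx
  obtain ⟨j, hj, rfl⟩ := exists_of_visits_pathSeg (hx.of_subset hI.subset)
  rcases Nat.lt_or_ge t (s + j) with hj' | hj'
  · have hmem := locs_mem_naturalLoop hpath hbe hlast le_rfl hst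
    rw [show s + j = t + 1 by omega]
    rwa [hs] at hmem
  · exact locs_mem_naturalLoop hpath hbe hlast (Nat.le_add_right s j) hj'

end InfinitePath

end VASS

theorem infinite_path_has_infinitely_many_instances_general
    {n : ℕ} {L : Type*} [Finite L] (P : VASS n L) (entry : L)
    (hEfin : P.E.Finite)
    (hred : P.Reducible entry)
    (locs : ℕ → L) (upds : ℕ → Upd n)
    (hpath : ∀ i, (locs i, upds i, locs (i+1)) ∈ P.E)
    (h0 : locs 0 = entry) :
    ∃ (l : L) (π : List (VEdge n L)), P.LoopPath entry l π ∧
      {i : ℕ | ∃ k, 1 ≤ k ∧ ∃ D, P.IsInstance π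
        ((List.range k).map (fun m => (locs (i+m), upds (i+m), locs (i+m+1)))) D}.Infinite := by
  obtain ⟨e, hbe, hT⟩ := VASS.exists_backEdge_infinitely_often hpath hEfin hred
  have hkey : ∀ t ∈ {t | (locs t, upds t, locs (t+1)) = e}, ∃ s ≤ t,
      (∀ r, s < r → r ≤ t → locs r ≠ e.2.2) ∧ ∃ π, P.LoopPath entry e.2.2 π ∧
        ∃ D, P.IsInstance π (VASS.pathSeg locs upds s (t+1-s)) D := by
    rintro t rfl
    exact VASS.exists_loopPath_instance_of_backEdge hpath h0 hbe
  choose! s hst hlast π hπ D hD using hkey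
  obtain ⟨π₀, hπ₀, hT₀⟩ := hT.exists_infinite_fiber (t := {π | P.LoopPath entry e.2.2 π}) hπ
    (VASS.finite_setOf_loopPath hEfin entry e.2.2)
  -- `e` enters `e.2.2` at time `t + 1`, so a later `t'` has its last visit of `e.2.2` after `t`.
  have hmono : StrictMonoOn s {t | (locs t, upds t, locs (t+1)) = e} := by
    intro t ht t' ht' htt'
    by_contra! hle
    exact hlast t' ht' (t+1) (by have := hst t ht; omega) htt' (congrArg (·.2.2) ht)
  refine ⟨e.2.2, π₀, hπ₀, (hT₀.image (hmono.injOn.mono Set.inter_subset_left)).mono ?_⟩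
  rintro _ ⟨t, ⟨ht, hπt⟩, rfl⟩
  exact ⟨t + 1 - s t, by have := hst t ht; omega, D t, hπt ▸ hD t ht⟩

/-- Every infinite path of a reducible VASS (with finitely many locations)
starting at the entry location contains infinitely many instances of some loop-path. -/
theorem infinite_path_has_infinitely_many_instances
    {n : ℕ} {L : Type*} [Finite L] (P : VASS n L) (entry : L)
    (hEfin : P.E.Finite)
    (hreach : P.EntryReach entry)
    (hred : P.Reducible entry)
    (locs : ℕ → L) (upds : ℕ → Upd n)
    (hpath : ∀ i, (locs i, upds i, locs (i+1)) ∈ P.E)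
    (h0 : locs 0 = entry) :
    ∃ (l : L) (π : List (VEdge n L)), P.LoopPath entry l π ∧
      {i : ℕ | ∃ k, 1 ≤ k ∧ ∃ D, P.IsInstance π
        ((List.range k).map (fun m => (locs (i+m), upds (i+m), locs (i+m+1)))) D}.Infinite :=
  infinite_path_has_infinitely_many_instances_general P entry hEfin hred locs upds hpath h0
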